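/- Let Σ and A be K×K positive definite matrices and M a random binary vector with P(M = 1_K) > 0. Then e_K^T E[V_M(Σ)]^{-1} e_K ≤ e_K^T E[V_M(A)]^{-1} E[V_M(A) Σ V_M(A)] E[V_M(A)]^{-1} e_K. -/

import Mathlib

open Matrix BigOperators Finset

/-- The `K × n_m` selection matrix `D_m` whose columns are the standard basis vectors
`e_t` for the indices `t` with `m t = true` (columns indexed by the subtype of such `t`). -/
noncomputable def selMat (K : ℕ) (m : Fin K → Bool) :
    Matrix (Fin K) {t : Fin K // m t = true} ℝ :=
  Matrix.of fun i j => if i = (j : Fin K) then 1 else 0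

/-- `V_m(Σ) = D_m (D_mᵀ Σ D_m)⁻¹ D_mᵀ`.  When `m = 0` the column index type is empty,
so this is the zero matrix, matching the convention `V_0(Σ) = 0`. -/
noncomputable def Vm (K : ℕ) (S : Matrix (Fin K) (Fin K) ℝ) (m : Fin K → Bool) :
    Matrix (Fin K) (Fin K) ℝ :=
  selMat K m * ((selMat K m)ᵀ * S * selMat K m)⁻¹ * (selMat K m)ᵀ

/-- `E[V_M(Σ)] = ∑ m P(M = m) V_m(Σ)`. -/
noncomputable def EVm (K : ℕ) (S : Matrix (Fin K) (Fin K) ℝ)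
    (p : (Fin K → Bool) → ℝ) : Matrix (Fin K) (Fin K) ℝ :=
  ∑ m : Fin K → Bool, p m • Vm K S m

/-! For each mask `m` the Gram matrix, in the inner product given by `Σ`, of the columns of
`V_m(A)` and `V_m(Σ)` is `[[V_m(A) Σ V_m(A), V_m(A)], [V_m(A), V_m(Σ)]]`, by the identities
`V_m(A) Σ V_m(Σ) = V_m(A)` and `V_m(Σ) Σ V_m(Σ) = V_m(Σ)`. Averaging over `M` keeps this block
matrix positive semidefinite, and `E[V_M(Σ)]` is positive definite because the full mask has
positive probability and `V_1(Σ) = Σ⁻¹`. Taking the Schur complement of `E[V_M(Σ)]` and conjugating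
by `E[V_M(A)]⁻¹` gives `E[V_M(Σ)]⁻¹ ≤ E[V_M(A)]⁻¹ E[V_M(A) Σ V_M(A)] E[V_M(A)]⁻¹` in the Loewner
order, whose diagonal entries are the claimed inequality. -/

open scoped MatrixOrder ComplexOrder

section Schur

variable {n 𝕜 : Type*} [Fintype n] [DecidableEq n] [RCLike 𝕜]

theorem Matrix.PosSemidef.inv_le_inv_mul_mul_conjTranspose_inv
    {W C B : Matrix n n 𝕜} (hB : B.PosDef) (hC : IsUnit C)
    (h : (fromBlocks W C Cᴴ B).PosSemidef) : B⁻¹ ≤ C⁻¹ * W * C⁻¹ᴴ := by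
  have := hB.isUnit.invertible
  have hC' := (isUnit_iff_isUnit_det C).mp hC
  have hschur := ((PosDef.fromBlocks₂₂ W C hB).mp h).mul_mul_conjTranspose_same C⁻¹
  have hCC : Cᴴ * C⁻¹ᴴ = 1 := by
    rw [← conjTranspose_mul, nonsing_inv_mul C hC', conjTranspose_one]
  have hcancel : C⁻¹ * (C * B⁻¹ * Cᴴ) * C⁻¹ᴴ = B⁻¹ := by
    rw [← Matrix.mul_assoc, ← Matrix.mul_assoc, nonsing_inv_mul C hC', Matrix.one_mul,
      Matrix.mul_assoc, hCC, Matrix.mul_one]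
  rwa [Matrix.mul_sub, Matrix.sub_mul, hcancel] at hschur

end Schur

section Selection

variable {K : ℕ}

lemma selMat_transpose_mul_mul_selMat (S : Matrix (Fin K) (Fin K) ℝ) (m : Fin K → Bool) :
    (selMat K m)ᵀ * S * selMat K m = S.submatrix Subtype.val Subtype.val := by
  ext i j
  simp [selMat, Matrix.mul_apply]

lemma isUnit_selMat_transpose_mul_mul_selMat {S : Matrix (Fin K) (Fin K) ℝ} (hS : S.PosDef)
    (m : Fin K → Bool) : IsUnit ((selMat K m)ᵀ * S * selMat K m) := by
  rw [selMat_transpose_mul_mul_selMat]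
  exact (hS.submatrix Subtype.val_injective).isUnit

lemma selMat_eq_submatrix_one (m : Fin K → Bool) :
    selMat K m = (1 : Matrix (Fin K) (Fin K) ℝ).submatrix id Subtype.val := by
  ext i j
  simp [selMat, one_apply]

lemma Vm_true (S : Matrix (Fin K) (Fin K) ℝ) : Vm K S (fun _ => true) = S⁻¹ := by
  let e : {t : Fin K // true = true} ≃ Fin K := Equiv.subtypeUnivEquiv fun _ => rfl
  rw [Vm, selMat_transpose_mul_mul_selMat, selMat_eq_submatrix_one,
    show S.submatrix Subtype.val Subtype.val = S.submatrix e e from rfl, inv_submatrix_equiv,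
    transpose_submatrix, transpose_one]
  change (1 : Matrix (Fin K) (Fin K) ℝ).submatrix id e * S⁻¹.submatrix e e * submatrix 1 e id = S⁻¹
  simp only [submatrix_mul_equiv, Matrix.one_mul, Matrix.mul_one, submatrix_id_id]

lemma isHermitian_Vm {S : Matrix (Fin K) (Fin K) ℝ} (hS : S.IsHermitian) (m : Fin K → Bool) :
    (Vm K S m).IsHermitian := by
  have h := isHermitian_mul_mul_conjTranspose (selMat K m)
    ((hS.submatrix (Subtype.val : {t // m t = true} → Fin K)).inv)
  rwa [conjTranspose_eq_transpose_of_trivial, ← selMat_transpose_mul_mul_selMat] at h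

lemma Vm_mul_mul_Vm (A : Matrix (Fin K) (Fin K) ℝ) {S : Matrix (Fin K) (Fin K) ℝ} (hS : S.PosDef)
    (m : Fin K → Bool) : Vm K A m * S * Vm K S m = Vm K A m := by
  set D := selMat K m
  have h := (isUnit_iff_isUnit_det _).mp (isUnit_selMat_transpose_mul_mul_selMat hS m)
  calc D * (Dᵀ * A * D)⁻¹ * Dᵀ * S * (D * (Dᵀ * S * D)⁻¹ * Dᵀ)
      = D * (Dᵀ * A * D)⁻¹ * ((Dᵀ * S * D) * (Dᵀ * S * D)⁻¹) * Dᵀ := by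
        simp only [Matrix.mul_assoc]
    _ = D * (Dᵀ * A * D)⁻¹ * Dᵀ := by rw [mul_nonsing_inv _ h, Matrix.mul_one]

lemma posSemidef_Vm {S : Matrix (Fin K) (Fin K) ℝ} (hS : S.PosDef) (m : Fin K → Bool) :
    (Vm K S m).PosSemidef := by
  have h := (hS.submatrix (Subtype.val_injective (p := fun t => m t = true))).inv.posSemidef
    |>.mul_mul_conjTranspose_same (selMat K m)
  rwa [conjTranspose_eq_transpose_of_trivial, ← selMat_transpose_mul_mul_selMat] at h

lemma posSemidef_fromBlocks_Vm {S A : Matrix (Fin K) (Fin K) ℝ} (hS : S.PosDef)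
    (hA : A.IsHermitian) (m : Fin K → Bool) :
    (fromBlocks (Vm K A m * S * Vm K A m) (Vm K A m) (Vm K A m) (Vm K S m)).PosSemidef := by
  have hVA := (isHermitian_Vm hA m).eq
  have hVS := (isHermitian_Vm hS.isHermitian m).eq
  have hSA : Vm K S m * S * Vm K A m = Vm K A m := by
    have h := congrArg conjTranspose (Vm_mul_mul_Vm A hS m)
    rwa [conjTranspose_mul, conjTranspose_mul, hVA, hVS, hS.isHermitian.eq,
      ← Matrix.mul_assoc] at h
  have h := hS.posSemidef.conjTranspose_mul_mul_same (fromCols (Vm K A m) (Vm K S m))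
  rwa [conjTranspose_fromCols_eq_fromRows_conjTranspose, fromRows_mul, fromRows_mul_fromCols,
    hVA, hVS, Vm_mul_mul_Vm A hS, Vm_mul_mul_Vm S hS, hSA] at h

end Selection

section Average

variable {K : ℕ} {S A : Matrix (Fin K) (Fin K) ℝ} {p : (Fin K → Bool) → ℝ}

lemma posDef_EVm (hS : S.PosDef) (hp0 : ∀ m, 0 ≤ p m) (hfull : 0 < p (fun _ => true)) :
    (EVm K S p).PosDef := by
  rw [EVm, ← Finset.add_sum_erase _ _ (Finset.mem_univ (fun _ => true)), Vm_true]
  exact (hS.inv.smul hfull).add_posSemidef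
    (posSemidef_sum _ fun m _ => (posSemidef_Vm hS m).smul (hp0 m))

theorem inv_EVm_le_inv_EVm_mul_mul_inv_EVm (hS : S.PosDef) (hA : A.PosDef) (hp0 : ∀ m, 0 ≤ p m)
    (hfull : 0 < p (fun _ => true)) :
    (EVm K S p)⁻¹ ≤ (EVm K A p)⁻¹ * (∑ m, p m • (Vm K A m * S * Vm K A m)) * (EVm K A p)⁻¹ := by
  have hC := posDef_EVm hA hp0 hfull
  have hblocks : (fromBlocks (∑ m, p m • (Vm K A m * S * Vm K A m)) (EVm K A p)
      (EVm K A p)ᴴ (EVm K S p)).PosSemidef := by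
    have hsum : fromBlocks (∑ m, p m • (Vm K A m * S * Vm K A m)) (EVm K A p) (EVm K A p)
        (EVm K S p) = ∑ m, p m •
          fromBlocks (Vm K A m * S * Vm K A m) (Vm K A m) (Vm K A m) (Vm K S m) := by
      ext (i | i) (j | j) <;> simp [EVm, Matrix.sum_apply]
    rw [hC.isHermitian.eq, hsum]
    exact posSemidef_sum _ fun m _ => (posSemidef_fromBlocks_Vm hS hA.isHermitian m).smul (hp0 m)
  have h := hblocks.inv_le_inv_mul_mul_conjTranspose_inv
    (posDef_EVm hS hp0 hfull) hC.isUnit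
  rwa [conjTranspose_nonsing_inv, hC.isHermitian.eq] at h

end Average

theorem stmt4_general (K : ℕ)
    (S A : Matrix (Fin (K+1)) (Fin (K+1)) ℝ) (hS : S.PosDef) (hA : A.PosDef)
    (p : (Fin (K+1) → Bool) → ℝ) (hp0 : ∀ m, 0 ≤ p m)
    (hfull : 0 < p (fun _ => true)) :
    (EVm (K+1) S p)⁻¹ (Fin.last K) (Fin.last K)
      ≤ ((EVm (K+1) A p)⁻¹
          * (∑ m : Fin (K+1) → Bool, p m • (Vm (K+1) A m * S * Vm (K+1) A m))
          * (EVm (K+1) A p)⁻¹) (Fin.last K) (Fin.last K) :=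
  sub_nonneg.mp (Matrix.le_iff.mp (inv_EVm_le_inv_EVm_mul_mul_inv_EVm hS hA hp0 hfull)).diag_nonneg

/-- Lemma 1(3), inequality: for positive definite `Σ` and `A` and a random
binary vector `M` with `P(M = 1_K) > 0`,
`e_Kᵀ E[V_M(Σ)]⁻¹ e_K ≤ e_Kᵀ E[V_M(A)]⁻¹ E[V_M(A) Σ V_M(A)] E[V_M(A)]⁻¹ e_K`. -/
theorem stmt4 (K : ℕ)
    (S A : Matrix (Fin (K+1)) (Fin (K+1)) ℝ) (hS : S.PosDef) (hA : A.PosDef)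
    (p : (Fin (K+1) → Bool) → ℝ) (hp0 : ∀ m, 0 ≤ p m) (hp1 : ∑ m, p m = 1)
    (hfull : 0 < p (fun _ => true)) :
    (EVm (K+1) S p)⁻¹ (Fin.last K) (Fin.last K)
      ≤ ((EVm (K+1) A p)⁻¹
          * (∑ m : Fin (K+1) → Bool, p m • (Vm (K+1) A m * S * Vm (K+1) A m))
          * (EVm (K+1) A p)⁻¹) (Fin.last K) (Fin.last K) :=
  stmt4_general K S A hS hA p hp0 hfull
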